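/- Let H be a Hermitian operator with 0 ≤ H ≤ I on a Hilbert space, and define the channel Φ_H(ρ) = ½tr(Hρ)|w⟩⟨w| + tr((I − ½H)ρ)|w'⟩⟨w'|, where |w⟩, |w'⟩ are orthogonal unit vectors. Then for a density operator ρ, Φ_H(ρ) is a pure state if and only if tr(Hρ) = 0; consequently the minimum output entropy of Φ_H is 0 if and only if H has a zero eigenvalue. -/

import Mathlib

open Matrix ComplexOrder

/-- A density operator: positive semidefinite with trace 1. -/
def IsDensity {d : Type*} [Fintype d] (ρ : Matrix d d ℂ) : Prop :=
  ρ.PosSemidef ∧ ρ.trace = 1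

/-- The outer product `|ψ⟩⟨ψ|`. -/
def outer {d : Type*} (ψ : d → ℂ) : Matrix d d ℂ :=
  vecMulVec ψ (star ψ)

/-- A matrix is a pure state if it is the outer product of a unit vector. -/
def IsPure {d : Type*} [Fintype d] (M : Matrix d d ℂ) : Prop :=
  ∃ v : d → ℂ, star v ⬝ᵥ v = 1 ∧ M = outer v

/-- Von Neumann entropy via eigenvalues (junk value `0` for non-Hermitian input). -/
noncomputable def vnEntropy {d : Type*} [Fintype d] [DecidableEq d]
    (ρ : Matrix d d ℂ) : ℝ :=
  if h : ρ.IsHermitian then -∑ i, h.eigenvalues i * Real.log (h.eigenvalues i) else 0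

/-- The channel `Φ_H(ρ) = ½tr(Hρ)|w⟩⟨w| + tr((I − ½H)ρ)|w'⟩⟨w'|`. -/
noncomputable def hamChannel {n m : ℕ} (H : Matrix (Fin n) (Fin n) ℂ)
    (w w' : Fin m → ℂ) (ρ : Matrix (Fin n) (Fin n) ℂ) : Matrix (Fin m) (Fin m) ℂ :=
  (((1 : ℂ) / 2) * (H * ρ).trace) • outer w +
    (((1 - ((1 : ℂ) / 2) • H) * ρ).trace) • outer w'

/-! With `tr ρ = 1` the output is `(t/2)|w⟩⟨w| + (1 - t/2)|w'⟩⟨w'|` with `t = tr(Hρ) ∈ [0, 1]`,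
a density matrix. The entropy of a density matrix vanishes iff it is idempotent: its eigenvalues
lie in `[0, 1]`, where `x log x ≤ 0` with equality only at `0` and `1`. Applying an idempotent
output to `w` gives `(t/2)² = t/2`, and `t ≤ 1` excludes `t/2 = 1`, so `t = 0`. Writing
`H = RᴴR` and `ρ = SᴴS`, `tr(Hρ)` is the squared Frobenius norm of `RSᴴ`, so `tr(Hρ) = 0` forces
`Hρ = 0`, and a nonzero column of `ρ` lies in `ker H`; conversely a kernel vector `v` gives the
density `|v⟩⟨v| / ‖v‖²`. -/

lemma Real.mul_log_eq_zero_iff_of_nonneg {x : ℝ} (hx : 0 ≤ x) :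
    x * Real.log x = 0 ↔ x = 0 ∨ x = 1 := by
  rw [mul_eq_zero, Real.log_eq_zero]
  constructor
  · rintro (h | h | h | h)
    · exact Or.inl h
    · exact Or.inl h
    · exact Or.inr h
    · linarith
  · rintro (h | h) <;> simp [h]

namespace Matrix

variable {d : Type*} [Fintype d]

lemma outer_mulVec (v x : d → ℂ) : outer v *ᵥ x = (star v ⬝ᵥ x) • v := by
  rw [outer, vecMulVec_mulVec, op_smul_eq_smul, dotProduct_comm]

lemma trace_outer (v : d → ℂ) : (outer v).trace = star v ⬝ᵥ v := by
  rw [outer, trace_vecMulVec, dotProduct_comm]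

lemma isIdempotentElem_outer {v : d → ℂ} (hv : star v ⬝ᵥ v = 1) :
    IsIdempotentElem (outer v) := by
  rw [IsIdempotentElem, outer, vecMulVec_mul_vecMulVec, hv, one_smul]

lemma isDensity_outer {v : d → ℂ} (hv : star v ⬝ᵥ v = 1) : IsDensity (outer v) :=
  ⟨posSemidef_vecMulVec_self_star v, (trace_outer v).trans hv⟩

lemma isIdempotentElem_of_isIdempotentElem_smul_outer_add_smul_outer {v v' : d → ℂ} {a b : ℂ}
    (hv : star v ⬝ᵥ v = 1) (horth : star v ⬝ᵥ v' = 0)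
    (h : IsIdempotentElem (a • outer v + b • outer v')) : IsIdempotentElem a := by
  set M := a • outer v + b • outer v'
  have hMv : M *ᵥ v = a • v := by
    rw [add_mulVec, smul_mulVec, smul_mulVec, outer_mulVec, outer_mulVec, hv, star_dotProduct,
      horth, star_zero, one_smul, zero_smul, smul_zero, add_zero]
  have hv0 : v ≠ 0 := by rintro rfl; simp at hv
  refine smul_left_injective ℂ hv0 ?_
  calc (a * a) • v = M *ᵥ (M *ᵥ v) := by rw [hMv, mulVec_smul, hMv, smul_smul]
    _ = a • v := by rw [mulVec_mulVec, h.eq, hMv]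

lemma trace_conjTranspose_mul_self_mul_conjTranspose_mul_self (R S : Matrix d d ℂ) :
    (Rᴴ * R * (Sᴴ * S)).trace = (R * Sᴴ * (R * Sᴴ)ᴴ).trace := by
  calc (Rᴴ * R * (Sᴴ * S)).trace = (Rᴴ * (R * Sᴴ * S)).trace := by simp only [Matrix.mul_assoc]
    _ = (R * Sᴴ * S * Rᴴ).trace := trace_mul_comm _ _
    _ = (R * Sᴴ * (R * Sᴴ)ᴴ).trace := by
      rw [conjTranspose_mul, conjTranspose_conjTranspose]; simp only [Matrix.mul_assoc]

variable [DecidableEq d]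

open scoped MatrixOrder in
lemma PosSemidef.trace_mul_nonneg {A B : Matrix d d ℂ} (hA : A.PosSemidef)
    (hB : B.PosSemidef) : 0 ≤ (A * B).trace := by
  obtain ⟨R, rfl⟩ := CStarAlgebra.nonneg_iff_eq_star_mul_self.mp hA.nonneg
  obtain ⟨S, rfl⟩ := CStarAlgebra.nonneg_iff_eq_star_mul_self.mp hB.nonneg
  exact trace_conjTranspose_mul_self_mul_conjTranspose_mul_self R S ▸
    (posSemidef_self_mul_conjTranspose _).trace_nonneg

open scoped MatrixOrder in
lemma PosSemidef.trace_mul_eq_zero_iff {A B : Matrix d d ℂ} (hA : A.PosSemidef)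
    (hB : B.PosSemidef) : (A * B).trace = 0 ↔ A * B = 0 := by
  refine ⟨fun h => ?_, fun h => h ▸ trace_zero d ℂ⟩
  obtain ⟨R, rfl⟩ := CStarAlgebra.nonneg_iff_eq_star_mul_self.mp hA.nonneg
  obtain ⟨S, rfl⟩ := CStarAlgebra.nonneg_iff_eq_star_mul_self.mp hB.nonneg
  have hRS : R * Sᴴ = 0 := by
    rwa [star_eq_conjTranspose, star_eq_conjTranspose,
      trace_conjTranspose_mul_self_mul_conjTranspose_mul_self,
      trace_mul_conjTranspose_self_eq_zero_iff] at h
  calc star R * R * (star S * S) = star R * (R * Sᴴ) * S := by simp only [Matrix.mul_assoc]; rfl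
    _ = 0 := by rw [hRS, Matrix.mul_zero, Matrix.zero_mul]

lemma IsHermitian.isIdempotentElem_iff {A : Matrix d d ℂ} (hA : A.IsHermitian) :
    IsIdempotentElem A ↔ ∀ i, hA.eigenvalues i = 0 ∨ hA.eigenvalues i = 1 := by
  rw [isIdempotentElem_iff_spectrum_subset ℝ A hA, hA.spectrum_real_eq_range_eigenvalues,
    Set.range_subset_iff]
  rfl

end Matrix

open Matrix

section IsDensity

variable {d : Type*} [Fintype d]

lemma IsDensity.smul_add_smul {A B : Matrix d d ℂ} (hA : IsDensity A) (hB : IsDensity B)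
    {a b : ℂ} (ha : 0 ≤ a) (hb : 0 ≤ b) (hab : a + b = 1) : IsDensity (a • A + b • B) :=
  ⟨(hA.1.smul ha).add (hB.1.smul hb), by
    rw [trace_add, trace_smul, trace_smul, hA.2, hB.2, smul_eq_mul, smul_eq_mul, mul_one, mul_one,
      hab]⟩

lemma IsPure.isIdempotentElem {M : Matrix d d ℂ} (hM : IsPure M) : IsIdempotentElem M := by
  obtain ⟨v, hv, rfl⟩ := hM
  exact isIdempotentElem_outer hv

variable [DecidableEq d]

lemma exists_isDensity_mul_eq_zero_iff (H : Matrix d d ℂ) :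
    (∃ ρ, IsDensity ρ ∧ H * ρ = 0) ↔ ∃ v, v ≠ 0 ∧ H *ᵥ v = 0 := by
  constructor
  · rintro ⟨ρ, hρ, hHρ⟩
    obtain ⟨j, hj⟩ : ∃ j, ρᵀ j ≠ 0 := by
      by_contra! h
      have hρ0 : ρ = 0 := transpose_eq_zero.mp (funext h)
      simpa [hρ0] using hρ.2
    refine ⟨ρᵀ j, hj, ?_⟩
    ext i
    simpa [mulVec, dotProduct, mul_apply] using congrFun₂ hHρ i j
  · rintro ⟨v, hv, hHv⟩
    have hvv : star v ⬝ᵥ v ≠ 0 := dotProduct_star_self_eq_zero.not.mpr hv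
    refine ⟨(star v ⬝ᵥ v)⁻¹ • outer v, ⟨?_, ?_⟩, ?_⟩
    · exact (posSemidef_vecMulVec_self_star v).smul
        (inv_nonneg.mpr (dotProduct_star_self_nonneg v))
    · rw [trace_smul, trace_outer, smul_eq_mul, inv_mul_cancel₀ hvv]
    · rw [mul_smul_comm, outer, mul_vecMulVec, hHv, zero_vecMulVec, smul_zero]

lemma IsDensity.trace_mul_le_one {H ρ : Matrix d d ℂ} (hHle : (1 - H).PosSemidef)
    (hρ : IsDensity ρ) : (H * ρ).trace ≤ 1 := by
  have := hHle.trace_mul_nonneg hρ.1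
  rwa [Matrix.sub_mul, Matrix.one_mul, trace_sub, hρ.2, sub_nonneg] at this

lemma IsDensity.eigenvalues_le_one {ρ : Matrix d d ℂ} (hρ : IsDensity ρ) (i : d) :
    hρ.1.isHermitian.eigenvalues i ≤ 1 := by
  have hsum : ∑ j, hρ.1.isHermitian.eigenvalues j = 1 := by
    simpa using congrArg RCLike.re (hρ.1.isHermitian.trace_eq_sum_eigenvalues.symm.trans hρ.2)
  exact hsum ▸ Finset.single_le_sum (fun j _ => hρ.1.eigenvalues_nonneg j) (Finset.mem_univ i)

lemma IsDensity.vnEntropy_eq_zero_iff {ρ : Matrix d d ℂ} (hρ : IsDensity ρ) :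
    vnEntropy ρ = 0 ↔ IsIdempotentElem ρ := by
  have hA := hρ.1.isHermitian
  rw [vnEntropy, dif_pos hA, neg_eq_zero, Finset.sum_eq_zero_iff_of_nonpos fun i _ =>
      Real.mul_log_nonpos (hρ.1.eigenvalues_nonneg i) (hρ.eigenvalues_le_one i),
    hA.isIdempotentElem_iff]
  simp only [Finset.mem_univ, true_implies]
  exact forall_congr' fun i => Real.mul_log_eq_zero_iff_of_nonneg (hρ.1.eigenvalues_nonneg i)

end IsDensity

section hamChannel

variable {n m : ℕ} {H ρ : Matrix (Fin n) (Fin n) ℂ} {w w' : Fin m → ℂ}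

lemma hamChannel_eq (hρ : ρ.trace = 1) :
    hamChannel H w w' ρ =
      (1 / 2 * (H * ρ).trace) • outer w + (1 - 1 / 2 * (H * ρ).trace) • outer w' := by
  rw [hamChannel, Matrix.sub_mul, Matrix.one_mul, trace_sub, hρ, smul_mul_assoc, trace_smul,
    smul_eq_mul]

lemma hamChannel_eq_outer (hρ : ρ.trace = 1) (ht : (H * ρ).trace = 0) :
    hamChannel H w w' ρ = outer w' := by
  simp [hamChannel_eq hρ, ht]

lemma isDensity_hamChannel (hH : H.PosSemidef) (hHle : (1 - H).PosSemidef)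
    (hw : star w ⬝ᵥ w = 1) (hw' : star w' ⬝ᵥ w' = 1) (hρ : IsDensity ρ) :
    IsDensity (hamChannel H w w' ρ) := by
  have ht0 : 0 ≤ 1 / 2 * (H * ρ).trace := mul_nonneg (by positivity) (hH.trace_mul_nonneg hρ.1)
  have ht1 : 0 ≤ 1 - 1 / 2 * (H * ρ).trace := by
    calc (0 : ℂ) ≤ (1 - (H * ρ).trace) + 1 / 2 * (H * ρ).trace :=
          add_nonneg (sub_nonneg.mpr (hρ.trace_mul_le_one hHle)) ht0
      _ = 1 - 1 / 2 * (H * ρ).trace := by ring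
  rw [hamChannel_eq hρ.2]
  exact (isDensity_outer hw).smul_add_smul (isDensity_outer hw') ht0 ht1 (by ring)

lemma isIdempotentElem_hamChannel_iff (hHle : (1 - H).PosSemidef) (hw : star w ⬝ᵥ w = 1)
    (hw' : star w' ⬝ᵥ w' = 1) (horth : star w ⬝ᵥ w' = 0) (hρ : IsDensity ρ) :
    IsIdempotentElem (hamChannel H w w' ρ) ↔ (H * ρ).trace = 0 := by
  refine ⟨fun h => ?_, fun ht => hamChannel_eq_outer hρ.2 ht ▸ isIdempotentElem_outer hw'⟩
  rw [hamChannel_eq hρ.2] at h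
  rcases IsIdempotentElem.iff_eq_zero_or_one.mp
    (isIdempotentElem_of_isIdempotentElem_smul_outer_add_smul_outer hw horth h) with h0 | h1
  · simpa using h0
  · have ht : (H * ρ).trace = 2 := by linear_combination 2 * h1
    have := hρ.trace_mul_le_one hHle
    rw [ht] at this
    norm_num at this

end hamChannel

theorem ham_channel_pure_iff_and_min_entropy
    {n m : ℕ} (H : Matrix (Fin n) (Fin n) ℂ)
    (hH : H.PosSemidef) (hHle : ((1 : Matrix (Fin n) (Fin n) ℂ) - H).PosSemidef)
    (w w' : Fin m → ℂ)
    (hw : star w ⬝ᵥ w = 1) (hw' : star w' ⬝ᵥ w' = 1) (horth : star w ⬝ᵥ w' = 0) :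
    (∀ ρ : Matrix (Fin n) (Fin n) ℂ, IsDensity ρ →
      (IsPure (hamChannel H w w' ρ) ↔ (H * ρ).trace = 0)) ∧
    ((∃ ρ : Matrix (Fin n) (Fin n) ℂ, IsDensity ρ ∧
        vnEntropy (hamChannel H w w' ρ) = 0) ↔
      ∃ v : Fin n → ℂ, v ≠ 0 ∧ H.mulVec v = 0) := by
  have hIdem (ρ) (hρ : IsDensity ρ) :
      IsIdempotentElem (hamChannel H w w' ρ) ↔ (H * ρ).trace = 0 :=
    isIdempotentElem_hamChannel_iff hHle hw hw' horth hρ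
  refine ⟨fun ρ hρ => ⟨fun hpure => (hIdem ρ hρ).mp hpure.isIdempotentElem,
    fun ht => ⟨w', hw', hamChannel_eq_outer hρ.2 ht⟩⟩, ?_⟩
  rw [← exists_isDensity_mul_eq_zero_iff]
  refine exists_congr fun ρ => and_congr_right fun hρ => ?_
  rw [(isDensity_hamChannel hH hHle hw hw' hρ).vnEntropy_eq_zero_iff, hIdem ρ hρ,
    hH.trace_mul_eq_zero_iff hρ.1]
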